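/- arXiv:1709.10400 — 5 statements merged into one kernel-verified Lean document; each statement's English description precedes it below -/
import Mathlib

section
/- Let ρ: ℝ³ → ℝ be nonnegative with r ↦ (1+|r|²)ρ(r) integrable, let R ∈ ℝ³ satisfy ∫ ρ(r)(r−R) dr = 0 (R is the centre of charge), and let j: ℝ³ → ℝ³ be integrable with r ↦ |r||j(r)| integrable. Let A(r) = a + ½ B × (r−G) be a uniform-field vector potential, set Λ = ∫ (r−R) × j(r) dr and J = ∫ (r−R) × (j(r) + ρ(r)A(r)) dr. Then J − Λ = ½ Q_R(ρ) B; consequently, if Q_R(ρ) is invertible, the magnetic field is determined by B = 2 Q_R(ρ)⁻¹ (J − Λ), without any ground-state assumption on (ρ, j). -/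
open MeasureTheory
open scoped Matrix

noncomputable section

abbrev E3 : Type := EuclideanSpace ℝ (Fin 3)

def toV (x : E3) : Fin 3 → ℝ := x
def ofV (x : Fin 3 → ℝ) : E3 := WithLp.toLp 2 x

/-- Cross product on `E3`. -/
def cross3 (u v : E3) : E3 := ofV (crossProduct (toV u) (toV v))

/-- Moment-of-inertia tensor `Q_C(ρ)`. -/
def QC (ρ : E3 → ℝ) (C : E3) : Matrix (Fin 3) (Fin 3) ℝ :=
  Matrix.of fun i j =>
    ∫ r : E3, ρ r * (‖r - C‖ ^ 2 * (if i = j then (1 : ℝ) else 0) - (r - C) i * (r - C) j)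

/-!
Since `r - G = (r - R) + (R - G)`, the extra term `(r - R) × ρ(r) A(r)` in `J` is the sum of
`(ρ(r) (r - R)) × (a + ½ B × (R - G))`, whose integral vanishes because `R` is the centre of charge,
and `½ ρ(r) (r - R) × (B × (r - R))`, which by the BAC–CAB rule equals
`½ ρ(r) (|r - R|² I - (r - R)(r - R)ᵀ) B` and so integrates to `½ Q_R(ρ) B`.
Every `ρ`-term is integrable because `|r - R|² ≲ 1 + |r|²`.
-/

section QuadraticGrowth

variable {E : Type*} [SeminormedAddCommGroup E]

lemma norm_sub_le_mul_one_add_sq (r c : E) : ‖r - c‖ ≤ (1 + ‖c‖) * (1 + ‖r‖ ^ 2) := by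
  nlinarith [norm_sub_le r c, sq_nonneg (‖r‖ - 1), norm_nonneg c,
    mul_nonneg (norm_nonneg c) (sq_nonneg ‖r‖)]

lemma norm_sub_sq_le_mul_one_add_sq (r c : E) :
    ‖r - c‖ ^ 2 ≤ 2 * (1 + ‖c‖ ^ 2) * (1 + ‖r‖ ^ 2) := by
  have h : ‖r - c‖ ^ 2 ≤ (‖r‖ + ‖c‖) ^ 2 := pow_le_pow_left₀ (norm_nonneg _) (norm_sub_le r c) 2
  nlinarith [sq_nonneg (‖r‖ - ‖c‖), mul_nonneg (sq_nonneg ‖c‖) (sq_nonneg ‖r‖)]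

end QuadraticGrowth

section Moments

variable {E F : Type*} [NormedAddCommGroup E] [MeasurableSpace E] [OpensMeasurableSpace E]
  [NormedAddCommGroup F] [NormedSpace ℝ F] {μ : Measure E} {ρ : E → ℝ}

lemma aestronglyMeasurable_of_integrable_one_add_sq_mul
    (hρ : Integrable (fun r => (1 + ‖r‖ ^ 2) * ρ r) μ) : AEStronglyMeasurable ρ μ := by
  have hweight : Continuous fun r : E => (1 + ‖r‖ ^ 2)⁻¹ :=
    (continuous_const.add (continuous_norm.pow 2)).inv₀ fun r =>
      (by positivity : (1 : ℝ) + ‖r‖ ^ 2 ≠ 0)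
  convert hweight.aestronglyMeasurable.mul hρ.aestronglyMeasurable using 1
  funext r
  show ρ r = (1 + ‖r‖ ^ 2)⁻¹ * ((1 + ‖r‖ ^ 2) * ρ r)
  rw [inv_mul_cancel_left₀ (by positivity)]

lemma MeasureTheory.Integrable.smul_of_norm_le_one_add_sq
    (hρ : Integrable (fun r => (1 + ‖r‖ ^ 2) * ρ r) μ)
    {g : E → F} (hg : AEStronglyMeasurable g μ) (C : ℝ) (hC : ∀ r, ‖g r‖ ≤ C * (1 + ‖r‖ ^ 2)) :
    Integrable (fun r => ρ r • g r) μ := by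
  refine (hρ.norm.const_mul C).mono'
    ((aestronglyMeasurable_of_integrable_one_add_sq_mul hρ).smul hg) (ae_of_all _ fun r => ?_)
  rw [norm_smul, norm_mul, Real.norm_of_nonneg (by positivity : (0 : ℝ) ≤ 1 + ‖r‖ ^ 2)]
  calc ‖ρ r‖ * ‖g r‖ ≤ ‖ρ r‖ * (C * (1 + ‖r‖ ^ 2)) := by gcongr; exact hC r
    _ = C * ((1 + ‖r‖ ^ 2) * ‖ρ r‖) := by ring

end Moments

lemma norm_sq_eq_dotProduct_toV (x : E3) : ‖x‖ ^ 2 = toV x ⬝ᵥ toV x := by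
  rw [EuclideanSpace.real_norm_sq_eq]
  simp [toV, dotProduct, sq]

lemma norm_cross3_le (u v : E3) : ‖cross3 u v‖ ≤ ‖u‖ * ‖v‖ := by
  have lagrange : ‖cross3 u v‖ ^ 2 = ‖u‖ ^ 2 * ‖v‖ ^ 2 - (toV u ⬝ᵥ toV v) ^ 2 := by
    rw [norm_sq_eq_dotProduct_toV, norm_sq_eq_dotProduct_toV u, norm_sq_eq_dotProduct_toV v]
    exact (cross_dot_cross _ _ _ _).trans (by rw [dotProduct_comm (toV v) (toV u)]; ring)
  refine (pow_le_pow_iff_left₀ (norm_nonneg _) (by positivity) two_ne_zero).mp ?_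
  rw [lagrange, mul_pow]
  nlinarith [sq_nonneg (toV u ⬝ᵥ toV v)]

def crossCLM : E3 →L[ℝ] E3 →L[ℝ] E3 :=
  LinearMap.mkContinuous₂
    (LinearMap.mk₂ ℝ cross3 (fun _ _ _ => by simp [cross3, toV, ofV])
      (fun _ _ _ => by simp [cross3, toV, ofV]) (fun _ _ _ => by simp [cross3, toV, ofV])
      (fun _ _ _ => by simp [cross3, toV, ofV]))
    1 (fun u v => by rw [one_mul]; exact norm_cross3_le u v)

@[simp] lemma crossCLM_apply (u v : E3) : crossCLM u v = cross3 u v := rfl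

def pointInertia (u : E3) : Matrix (Fin 3) (Fin 3) ℝ :=
  Matrix.of fun i j => ‖u‖ ^ 2 * (if i = j then (1 : ℝ) else 0) - u i * u j

lemma QC_apply (ρ : E3 → ℝ) (C : E3) (i j : Fin 3) :
    QC ρ C i j = ∫ r, ρ r * pointInertia (r - C) i j := rfl

lemma toV_cross3_cross3_self (u B : E3) :
    toV (cross3 u (cross3 B u)) = pointInertia u *ᵥ toV B := by
  have hcross : toV (cross3 u (cross3 B u)) =
      crossProduct (toV u) (crossProduct (toV B) (toV u)) := rfl
  rw [hcross, cross_cross_eq_smul_sub_smul', ← norm_sq_eq_dotProduct_toV]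
  ext i
  fin_cases i <;> simp [pointInertia, Matrix.mulVec, dotProduct, Fin.sum_univ_three, toV] <;> ring

lemma abs_pointInertia_le (u : E3) (i j : Fin 3) : |pointInertia u i j| ≤ 2 * ‖u‖ ^ 2 := by
  have hi : |u i| ≤ ‖u‖ := PiLp.norm_apply_le u i
  have hj : |u j| ≤ ‖u‖ := PiLp.norm_apply_le u j
  have hij : |u i * u j| ≤ ‖u‖ ^ 2 := by
    rw [abs_mul, sq]; exact mul_le_mul hi hj (abs_nonneg _) (norm_nonneg _)
  simp only [pointInertia, Matrix.of_apply]
  split_ifs <;> rw [abs_le] at hij ⊢ <;> constructor <;> nlinarith [sq_nonneg ‖u‖]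

lemma smul_cross3_cross3_self_apply (c : ℝ) (u B : E3) (i : Fin 3) :
    (c • cross3 u (cross3 B u)) i = ∑ k, c * pointInertia u i k * B k := by
  rw [PiLp.smul_apply, smul_eq_mul, ← toV, toV_cross3_cross3_self, Matrix.mulVec, dotProduct,
    Finset.mul_sum]
  simp only [toV, mul_assoc]

lemma MeasureTheory.Integrable.cross3_const {α : Type*} [MeasurableSpace α] {μ : Measure α}
    {f : α → E3} (hf : Integrable f μ) (c : E3) : Integrable (fun x => cross3 (f x) c) μ :=
  (crossCLM.flip c).integrable_comp hf

lemma integral_cross3_const {α : Type*} [MeasurableSpace α] {μ : Measure α} {f : α → E3}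
    (hf : Integrable f μ) (c : E3) : ∫ x, cross3 (f x) c ∂μ = cross3 (∫ x, f x ∂μ) c :=
  (crossCLM.flip c).integral_comp_comm hf

lemma integrable_cross3_sub_const {j : E3 → E3} (hj : Integrable j)
    (hj1 : Integrable fun r : E3 => ‖r‖ * ‖j r‖) (R : E3) :
    Integrable fun r => cross3 (r - R) (j r) := by
  refine (hj1.add (hj.norm.const_mul ‖R‖)).mono'
    (crossCLM.aestronglyMeasurable_comp₂ (continuous_id.sub continuous_const).aestronglyMeasurable
      hj.aestronglyMeasurable) (ae_of_all _ fun r => ?_)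
  calc ‖cross3 (r - R) (j r)‖ ≤ ‖r - R‖ * ‖j r‖ := norm_cross3_le _ _
    _ ≤ (‖r‖ + ‖R‖) * ‖j r‖ := by gcongr; exact norm_sub_le r R
    _ = ‖r‖ * ‖j r‖ + ‖R‖ * ‖j r‖ := add_mul _ _ _

section InertiaTensor

variable {ρ : E3 → ℝ}

lemma integrable_smul_sub_const (hρ : Integrable fun r : E3 => (1 + ‖r‖ ^ 2) * ρ r) (R : E3) :
    Integrable fun r => ρ r • (r - R) :=
  hρ.smul_of_norm_le_one_add_sq (continuous_id.sub continuous_const).aestronglyMeasurable _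
    fun r => norm_sub_le_mul_one_add_sq r R

lemma integrable_mul_pointInertia (hρ : Integrable fun r : E3 => (1 + ‖r‖ ^ 2) * ρ r) (R : E3)
    (i k : Fin 3) : Integrable fun r => ρ r * pointInertia (r - R) i k := by
  have hcont : Continuous fun r : E3 => pointInertia (r - R) i k := by
    simp only [pointInertia, Matrix.of_apply]; fun_prop
  refine hρ.smul_of_norm_le_one_add_sq hcont.aestronglyMeasurable (4 * (1 + ‖R‖ ^ 2)) fun r => ?_
  calc ‖pointInertia (r - R) i k‖ ≤ 2 * ‖r - R‖ ^ 2 := abs_pointInertia_le _ _ _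
    _ ≤ 2 * (2 * (1 + ‖R‖ ^ 2) * (1 + ‖r‖ ^ 2)) := by
        gcongr; exact norm_sub_sq_le_mul_one_add_sq r R
    _ = _ := by ring

lemma integrable_smul_cross3_cross3 (hρ : Integrable fun r : E3 => (1 + ‖r‖ ^ 2) * ρ r)
    (R B : E3) : Integrable fun r => ρ r • cross3 (r - R) (cross3 B (r - R)) :=
  Integrable.of_eval_piLp fun i => by
    simp_rw [smul_cross3_cross3_self_apply]
    exact integrable_finsetSum _ fun k _ => (integrable_mul_pointInertia hρ R i k).mul_const _

lemma integral_smul_cross3_cross3 (hρ : Integrable fun r : E3 => (1 + ‖r‖ ^ 2) * ρ r)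
    (R B : E3) : ∫ r, ρ r • cross3 (r - R) (cross3 B (r - R)) = ofV (QC ρ R *ᵥ toV B) := by
  ext i
  rw [eval_integral_piLp (integrable_smul_cross3_cross3 hρ R B).eval_piLp]
  simp_rw [smul_cross3_cross3_self_apply]
  rw [integral_finsetSum _ fun k _ => (integrable_mul_pointInertia hρ R i k).mul_const _]
  simp only [integral_mul_const, ← QC_apply]
  rfl

end InertiaTensor

theorem physical_minus_intrinsic_moment_eq_half_Q_mul_B_general
    (ρ : E3 → ℝ) (j : E3 → E3) (R a B G : E3)
    (hInt : Integrable fun r : E3 => (1 + ‖r‖ ^ 2) * ρ r)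
    (hR : (∫ r : E3, ρ r • (r - R)) = 0)
    (hj : Integrable j)
    (hj1 : Integrable fun r : E3 => ‖r‖ * ‖j r‖)
    (A : E3 → E3) (hA : ∀ r, A r = a + (2⁻¹ : ℝ) • cross3 B (r - G))
    (Λ J : E3)
    (hΛ : Λ = ∫ r : E3, cross3 (r - R) (j r))
    (hJ : J = ∫ r : E3, cross3 (r - R) (j r + ρ r • A r)) :
    J - Λ = ofV ((2⁻¹ : ℝ) • (QC ρ R).mulVec (toV B)) ∧
      (IsUnit (QC ρ R) → B = ofV ((2 : ℝ) • ((QC ρ R)⁻¹).mulVec (toV (J - Λ)))) := by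
  set c := a + (2⁻¹ : ℝ) • cross3 B (R - G)
  have hsplit : ∀ r, cross3 (r - R) (j r + ρ r • A r) = cross3 (r - R) (j r) +
      (cross3 (ρ r • (r - R)) c + (2⁻¹ : ℝ) • (ρ r • cross3 (r - R) (cross3 B (r - R)))) := by
    intro r
    rw [hA, ← sub_add_sub_cancel r R G]
    simp only [c, ← crossCLM_apply, map_add, map_smul, smul_apply]
    module
  have hu := (integrable_smul_sub_const hInt R).cross3_const c
  have hQ : Integrable fun r => (2⁻¹ : ℝ) • (ρ r • cross3 (r - R) (cross3 B (r - R))) :=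
    (integrable_smul_cross3_cross3 hInt R B).smul (2⁻¹ : ℝ)
  have hrest : Integrable fun r => cross3 (ρ r • (r - R)) c +
      (2⁻¹ : ℝ) • (ρ r • cross3 (r - R) (cross3 B (r - R))) := hu.add hQ
  have hJΛ : J - Λ = ofV ((2⁻¹ : ℝ) • (QC ρ R).mulVec (toV B)) := by
    rw [hJ, hΛ, integral_congr_ae (ae_of_all _ hsplit),
      integral_add (integrable_cross3_sub_const hj hj1 R) hrest, add_sub_cancel_left,
      integral_add hu hQ, integral_cross3_const (integrable_smul_sub_const hInt R), hR,
      integral_smul, integral_smul_cross3_cross3 hInt]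
    rw [← crossCLM_apply, map_zero, zero_apply, zero_add]
    rfl
  refine ⟨hJΛ, fun hunit => ?_⟩
  have hdet : IsUnit (QC ρ R).det := (Matrix.isUnit_iff_isUnit_det _).mp hunit
  rw [hJΛ]
  show B = ofV ((2 : ℝ) • (QC ρ R)⁻¹ *ᵥ ((2⁻¹ : ℝ) • QC ρ R *ᵥ toV B))
  rw [Matrix.mulVec_smul, Matrix.mulVec_mulVec, Matrix.nonsing_inv_mul _ hdet, Matrix.one_mulVec,
    smul_smul, mul_inv_cancel₀ two_ne_zero, one_smul]
  rfl

/-- `J − Λ = ½ Q_R(ρ) B`, so if `Q_R(ρ)` is invertible then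
`B = 2 Q_R(ρ)⁻¹ (J − Λ)`, without any ground-state assumption. -/
theorem physical_minus_intrinsic_moment_eq_half_Q_mul_B
    (ρ : E3 → ℝ) (j : E3 → E3) (R a B G : E3)
    (hρ : ∀ r, 0 ≤ ρ r)
    (hInt : Integrable fun r : E3 => (1 + ‖r‖ ^ 2) * ρ r)
    (hR : (∫ r : E3, ρ r • (r - R)) = 0)
    (hj : Integrable j)
    (hj1 : Integrable fun r : E3 => ‖r‖ * ‖j r‖)
    (A : E3 → E3) (hA : ∀ r, A r = a + (2⁻¹ : ℝ) • cross3 B (r - G))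
    (Λ J : E3)
    (hΛ : Λ = ∫ r : E3, cross3 (r - R) (j r))
    (hJ : J = ∫ r : E3, cross3 (r - R) (j r + ρ r • A r)) :
    J - Λ = ofV ((2⁻¹ : ℝ) • (QC ρ R).mulVec (toV B)) ∧
      (IsUnit (QC ρ R) → B = ofV ((2 : ℝ) • ((QC ρ R)⁻¹).mulVec (toV (J - Λ)))) :=
  physical_minus_intrinsic_moment_eq_half_Q_mul_B_general ρ j R a B G hInt hR hj hj1 A hA Λ J hΛ hJ
end
end

section
/- Let ρ: ℝ³ → ℝ be differentiable, let b, R ∈ ℝ³, and let W be the 3×3 real matrix representing the linear map v ↦ b × v. If the angular directional derivative vanishes everywhere, i.e. ∇ρ(r) · (b × (r−R)) = 0 for all r ∈ ℝ³, then ρ is invariant under the rotation flow about the axis through R in direction b: for all t ∈ ℝ and all r ∈ ℝ³, ρ(R + exp(tW)(r−R)) = ρ(r), where exp denotes the matrix exponential. -/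
open MeasureTheory

noncomputable section

/-!
The curve `γ s = R + exp(sW)(r − R)` solves `γ' = W (γ − R) = b × (γ − R)`, so by the chain rule
`(ρ ∘ γ)' = ∇ρ(γ) · (b × (γ − R)) = 0`. Hence `ρ ∘ γ` is constant, equal to `ρ (γ 0) = ρ r`.
-/

open Matrix NormedSpace

section FirstIntegral

variable {E F : Type*} [NormedAddCommGroup E] [NormedSpace ℝ E]
  [NormedAddCommGroup F] [NormedSpace ℝ F]

theorem Differentiable.apply_eq_of_hasDerivAt_of_fderiv_apply_eq_zero {f : E → F}
    (hf : Differentiable ℝ f) {V : E → E} (hfV : ∀ x, fderiv ℝ f x (V x) = 0) {γ : ℝ → E}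
    (hγ : ∀ s, HasDerivAt γ (V (γ s)) s) (s t : ℝ) : f (γ s) = f (γ t) := by
  have hconst : ∀ u, HasDerivAt (f ∘ γ) 0 u := fun u => by
    simpa [hfV] using (hf (γ u)).hasFDerivAt.comp_hasDerivAt u (hγ u)
  exact is_const_of_deriv_eq_zero (fun u => (hconst u).differentiableAt)
    (fun u => (hconst u).deriv) s t

end FirstIntegral

section MatrixFlow

-- Any normed algebra structure inducing the product topology will do: `exp` depends only on the
-- topology, while its derivative needs a complete normed algebra.
attribute [local instance] Matrix.linftyOpNormedRing Matrix.linftyOpNormedAlgebra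

theorem Matrix.hasDerivAt_exp_smul_mulVec {𝕂 n : Type*} [RCLike 𝕂] [Fintype n] [DecidableEq n]
    (A : Matrix n n 𝕂) (v : n → 𝕂) (s : 𝕂) :
    HasDerivAt (fun u : 𝕂 => exp (u • A) *ᵥ v) (A *ᵥ (exp (s • A) *ᵥ v)) s := by
  let applyToV : Matrix n n 𝕂 →L[𝕂] n → 𝕂 :=
    ((Matrix.mulVecBilin 𝕂 𝕂).flip v).toContinuousLinearMap
  exact (applyToV.hasFDerivAt.comp_hasDerivAt s (hasDerivAt_exp_smul_const' A s)).congr_deriv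
    (mulVec_mulVec v A (exp (s • A))).symm

end MatrixFlow

theorem ofV_crossMatrix_mulVec (b : E3) (u : Fin 3 → ℝ) :
    ofV (!![0, -b 2, b 1; b 2, 0, -b 0; -b 1, b 0, 0] *ᵥ u) = cross3 b (ofV u) := by
  ext i
  fin_cases i <;> simp [cross3, toV, ofV, cross_apply, dotProduct, Fin.sum_univ_three] <;> ring

/-- if the angular directional derivative `∇ρ(r)·(b×(r−R))` vanishes
everywhere, then `ρ` is invariant under the rotation flow `r ↦ R + exp(tW)(r−R)`
about the axis through `R` in direction `b`, where `W` is the matrix of `v ↦ b × v`. -/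
theorem cylindrical_symmetry_of_vanishing_angular_derivative
    (ρ : E3 → ℝ) (b R : E3)
    (hρ : Differentiable ℝ ρ)
    (W : Matrix (Fin 3) (Fin 3) ℝ)
    (hW : W = !![0, -b 2, b 1; b 2, 0, -b 0; -b 1, b 0, 0])
    (hang : ∀ r : E3, fderiv ℝ ρ r (cross3 b (r - R)) = 0) :
    ∀ (t : ℝ) (r : E3),
      ρ (R + ofV ((NormedSpace.exp (t • W)).mulVec (toV (r - R)))) = ρ r := by
  intro t r
  set γ : ℝ → E3 := fun s => R + ofV (exp (s • W) *ᵥ toV (r - R))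
  have hγ : ∀ s, HasDerivAt γ (cross3 b (γ s - R)) s := fun s => by
    have h := ((EuclideanSpace.equiv (Fin 3) ℝ).symm.hasFDerivAt.comp_hasDerivAt s
      (hasDerivAt_exp_smul_mulVec W (toV (r - R)) s)).const_add R
    refine h.congr_deriv ?_
    rw [add_sub_cancel_left, hW]
    exact ofV_crossMatrix_mulVec b _
  have hγ₀ : γ 0 = r := by simp [γ, ofV, toV]
  calc ρ (γ t) = ρ (γ 0) := hρ.apply_eq_of_hasDerivAt_of_fderiv_apply_eq_zero hang hγ t 0
    _ = ρ r := congrArg ρ hγ₀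
end
end

section
/- Let ψ: ℝ³ → ℂ be differentiable at r ∈ ℝ³, set ρ(r) = |ψ(r)|² and j_p(r) = Im(conj(ψ(r)) · ∇ψ(r)). Then the pointwise identity ¼|∇ρ(r)|² + |j_p(r)|² = |ψ(r)|² ‖∇ψ(r)‖² holds, where ‖∇ψ(r)‖² = Σ_k |∂_k ψ(r)|². In particular, at every point where ρ(r) > 0, (|∇ρ(r)|² + 4|j_p(r)|²)/(8ρ(r)) = ½‖∇ψ(r)‖², so that the current-corrected von Weizsäcker energy density is bounded by (equals, for one particle) half the canonical kinetic-energy density. -/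
/-! For `z = ψ(r)` and `w = ∂ᵥψ(r)` one has `∂ᵥρ(r) = 2 Re(z̄ w)` and `j_p · v = Im(z̄ w)`, so the
identity in each direction `v` is `|z̄ w|² = (Re z̄ w)² + (Im z̄ w)²`, i.e. the multiplicativity of
`|·|` on `ℂ`. Summing over the coordinate directions gives the first claim, and dividing by `2ρ`
gives the second. -/

open MeasureTheory

noncomputable section

theorem Complex.re_conj_mul_sq_add_im_conj_mul_sq (z w : ℂ) :
    (starRingEnd ℂ z * w).re ^ 2 + (starRingEnd ℂ z * w).im ^ 2 = ‖z‖ ^ 2 * ‖w‖ ^ 2 := by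
  rw [← mul_pow, ← Complex.norm_conj z, ← norm_mul, Complex.sq_norm, Complex.normSq_apply]
  ring

section

variable {E : Type*} [NormedAddCommGroup E] [NormedSpace ℝ E] {ψ : E → ℂ} {r : E}

theorem fderiv_norm_sq_apply_eq_two_mul_re_conj_mul (hψ : DifferentiableAt ℝ ψ r) (v : E) :
    fderiv ℝ (fun x => ‖ψ x‖ ^ 2) r v = 2 * (starRingEnd ℂ (ψ r) * fderiv ℝ ψ r v).re := by
  rw [hψ.hasFDerivAt.norm_sq.fderiv]
  simp only [smul_apply, ContinuousLinearMap.comp_apply, innerSL_apply_apply,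
    Complex.inner, nsmul_eq_mul, Nat.cast_ofNat, mul_comm (fderiv ℝ ψ r v)]

theorem quarter_sq_fderiv_norm_sq_add_sq_im_conj_mul (hψ : DifferentiableAt ℝ ψ r) (v : E) :
    4⁻¹ * (fderiv ℝ (fun x => ‖ψ x‖ ^ 2) r v) ^ 2 + (starRingEnd ℂ (ψ r) * fderiv ℝ ψ r v).im ^ 2
      = ‖ψ r‖ ^ 2 * ‖fderiv ℝ ψ r v‖ ^ 2 := by
  rw [fderiv_norm_sq_apply_eq_two_mul_re_conj_mul hψ,
    ← Complex.re_conj_mul_sq_add_im_conj_mul_sq]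
  ring

theorem quarter_sum_sq_fderiv_norm_sq_add_sum_sq_im_conj_mul {ι : Type*} [Fintype ι]
    (hψ : DifferentiableAt ℝ ψ r) (v : ι → E) :
    4⁻¹ * ∑ i, (fderiv ℝ (fun x => ‖ψ x‖ ^ 2) r (v i)) ^ 2
        + ∑ i, (starRingEnd ℂ (ψ r) * fderiv ℝ ψ r (v i)).im ^ 2
      = ‖ψ r‖ ^ 2 * ∑ i, ‖fderiv ℝ ψ r (v i)‖ ^ 2 := by
  simp only [Finset.mul_sum, ← Finset.sum_add_distrib,
    quarter_sq_fderiv_norm_sq_add_sq_im_conj_mul hψ]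

end

/-- the pointwise identity `¼|∇ρ|² + |j_p|² = |ψ|² ‖∇ψ‖²` for
`ρ = |ψ|²` and `j_p = Im(ψ̄ ∇ψ)`; in particular, where `ρ > 0`, the
current-corrected von Weizsäcker density `(|∇ρ|² + 4|j_p|²)/(8ρ)` equals
half the canonical kinetic-energy density. -/
theorem von_weizsacker_current_identity
    (ψ : E3 → ℂ) (r : E3) (hψ : DifferentiableAt ℝ ψ r) :
    (4⁻¹ * (∑ i : Fin 3,
          (fderiv ℝ (fun x => ‖ψ x‖ ^ 2) r (EuclideanSpace.single i 1)) ^ 2)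
        + (∑ i : Fin 3,
          (((starRingEnd ℂ) (ψ r) * fderiv ℝ ψ r (EuclideanSpace.single i 1)).im) ^ 2)
      = ‖ψ r‖ ^ 2 * ∑ i : Fin 3, ‖fderiv ℝ ψ r (EuclideanSpace.single i 1)‖ ^ 2) ∧
    (0 < ‖ψ r‖ ^ 2 →
      ((∑ i : Fin 3,
            (fderiv ℝ (fun x => ‖ψ x‖ ^ 2) r (EuclideanSpace.single i 1)) ^ 2)
          + 4 * ∑ i : Fin 3,
            (((starRingEnd ℂ) (ψ r) * fderiv ℝ ψ r (EuclideanSpace.single i 1)).im) ^ 2)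
          / (8 * ‖ψ r‖ ^ 2)
        = 2⁻¹ * ∑ i : Fin 3, ‖fderiv ℝ ψ r (EuclideanSpace.single i 1)‖ ^ 2) := by
  have identity := quarter_sum_sq_fderiv_norm_sq_add_sum_sq_im_conj_mul hψ
    fun i : Fin 3 => EuclideanSpace.single i (1 : ℝ)
  refine ⟨identity, fun hρ => ?_⟩
  rw [div_eq_iff (mul_pos (by norm_num) hρ).ne']
  linear_combination 4 * identity
end
end

section
/- Let ρ: ℝ³ → ℝ and j_m: ℝ³ → ℝ³ be continuously differentiable with compact support, let R ∈ ℝ³ satisfy ∫ ρ(r)(r−R) dr = 0, let A(r) = A₀ + ½ B × (r−R) for fixed A₀, B ∈ ℝ³, and assume the physical current is divergence-free: div(j_m + ρA)(r) = 0 for all r. Then for all coordinate indices a, b ∈ {1,2,3}: ½ ∫ ρ(r) [ (r−R)_b (B × (r−R))_a + (r−R)_a (B × (r−R))_b ] dr = − ∫ [ (r−R)_b (j_m)_a(r) + (r−R)_a (j_m)_b(r) ] dr. -/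
/-!
With `φ r = (r - R)_a (r - R)_b` one has `∇φ · j = (r - R)_b j_a + (r - R)_a j_b` and
`div (φ j) = ∇φ · j + φ div j`. The divergence of the compactly supported field `φ j` integrates to
zero, so the symmetrized first moment of a divergence-free current vanishes. Splitting the physical
current as `j_m + ρ A₀ + ½ ρ B × (r - R)`, the `A₀` part is a linear image of `∫ ρ (r - R) = 0`,
and what remains is the identity.
-/

open MeasureTheory

noncomputable section

section IntegralFDeriv

variable {E G : Type*} [NormedAddCommGroup E] [NormedSpace ℝ E]
  [MeasurableSpace E] [BorelSpace E] [NormedAddCommGroup G] [NormedSpace ℝ G]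
  {μ : Measure E} [μ.IsAddHaarMeasure]

theorem ContDiff.integrable_fderiv_apply {g : E → G} (hg : ContDiff ℝ 1 g)
    (hgs : HasCompactSupport g) (v : E) : Integrable (fun x ↦ fderiv ℝ g x v) μ :=
  ((hg.continuous_fderiv one_ne_zero).clm_apply continuous_const).integrable_of_hasCompactSupport
    (hgs.fderiv_apply ℝ v)

theorem integral_fderiv_apply_eq_zero [FiniteDimensional ℝ E] {g : E → G} (hg : ContDiff ℝ 1 g)
    (hgs : HasCompactSupport g) (v : E) : ∫ x, fderiv ℝ g x v ∂μ = 0 := by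
  simpa using integral_smul_fderiv_eq_neg_fderiv_smul_of_integrable (μ := μ) (v := v)
    (f := fun _ ↦ (1 : ℝ)) (by simp) (by simpa using hg.integrable_fderiv_apply hgs v)
    (by simpa using hg.continuous.integrable_of_hasCompactSupport hgs)
    (fun _ _ ↦ differentiableAt_const _) (fun x _ ↦ hg.differentiable one_ne_zero x)

end IntegralFDeriv

section Divergence

variable {ι : Type*} [Fintype ι] [DecidableEq ι] {μ : Measure (EuclideanSpace ℝ ι)}
  [μ.IsAddHaarMeasure]

def divergence (f : EuclideanSpace ℝ ι → EuclideanSpace ℝ ι) (x : EuclideanSpace ℝ ι) : ℝ :=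
  ∑ i, fderiv ℝ f x (EuclideanSpace.single i 1) i

theorem integral_divergence_eq_zero {f : EuclideanSpace ℝ ι → EuclideanSpace ℝ ι}
    (hf : ContDiff ℝ 1 f) (hfs : HasCompactSupport f) : ∫ x, divergence f x ∂μ = 0 := by
  have hint (i : ι) := hf.integrable_fderiv_apply (μ := μ) hfs (EuclideanSpace.single i 1)
  have hint_apply (i : ι) : Integrable (fun x ↦ fderiv ℝ f x (EuclideanSpace.single i 1) i) μ :=
    (EuclideanSpace.proj i : EuclideanSpace ℝ ι →L[ℝ] ℝ).integrable_comp (hint i)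
  simp only [divergence]
  rw [integral_finsetSum _ fun i _ ↦ hint_apply i]
  refine Finset.sum_eq_zero fun i _ ↦ ?_
  simpa [integral_fderiv_apply_eq_zero hf hfs] using
    (EuclideanSpace.proj i : EuclideanSpace ℝ ι →L[ℝ] ℝ).integral_comp_comm (hint i)

theorem divergence_smul {φ : EuclideanSpace ℝ ι → ℝ} {f : EuclideanSpace ℝ ι → EuclideanSpace ℝ ι}
    {x : EuclideanSpace ℝ ι} (hφ : DifferentiableAt ℝ φ x) (hf : DifferentiableAt ℝ f x) :
    divergence (fun y ↦ φ y • f y) x = fderiv ℝ φ x (f x) + φ x * divergence f x := by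
  conv_rhs => rw [← (EuclideanSpace.basisFun ι ℝ).sum_repr (f x)]
  simp [divergence, fderiv_fun_smul hφ hf, Finset.sum_add_distrib, Finset.mul_sum, mul_comm,
    add_comm]

theorem integral_fderiv_apply_eq_zero_of_divergence_eq_zero {φ : EuclideanSpace ℝ ι → ℝ}
    {f : EuclideanSpace ℝ ι → EuclideanSpace ℝ ι} (hφ : ContDiff ℝ 1 φ) (hf : ContDiff ℝ 1 f)
    (hfs : HasCompactSupport f) (hdiv : ∀ x, divergence f x = 0) :
    ∫ x, fderiv ℝ φ x (f x) ∂μ = 0 := by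
  calc ∫ x, fderiv ℝ φ x (f x) ∂μ = ∫ x, divergence (fun y ↦ φ y • f y) x ∂μ := by
        congr 1 with x
        rw [divergence_smul (hφ.differentiable one_ne_zero x) (hf.differentiable one_ne_zero x),
          hdiv, mul_zero, add_zero]
    _ = 0 := integral_divergence_eq_zero (hφ.smul hf) (hfs.smul_left (f := φ))

end Divergence

section FirstMoment

variable {ι : Type*} [Fintype ι] {μ : Measure (EuclideanSpace ℝ ι)}

def symmFirstMoment (μ : Measure (EuclideanSpace ℝ ι)) (R : EuclideanSpace ℝ ι) (a b : ι)
    (j : EuclideanSpace ℝ ι → EuclideanSpace ℝ ι) : ℝ :=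
  ∫ x, ((x - R) b * j x a + (x - R) a * j x b) ∂μ

theorem fderiv_sub_apply_mul_sub_apply (R x v : EuclideanSpace ℝ ι) (a b : ι) :
    fderiv ℝ (fun y ↦ (y - R) a * (y - R) b) x v = (x - R) a * v b + (x - R) b * v a := by
  have hcoord (c : ι) :
      HasFDerivAt (fun y : EuclideanSpace ℝ ι ↦ (y - R) c)
        (EuclideanSpace.proj c : EuclideanSpace ℝ ι →L[ℝ] ℝ) x := by
    simpa using (EuclideanSpace.proj c : EuclideanSpace ℝ ι →L[ℝ] ℝ).hasFDerivAt.sub_const (R c)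
  rw [((hcoord a).fun_mul (hcoord b)).fderiv]
  simp

theorem symmFirstMoment_add [IsFiniteMeasureOnCompacts μ] (R : EuclideanSpace ℝ ι) (a b : ι)
    {f g : EuclideanSpace ℝ ι → EuclideanSpace ℝ ι} (hf : Continuous f) (hfs : HasCompactSupport f)
    (hg : Continuous g) (hgs : HasCompactSupport g) :
    symmFirstMoment μ R a b (fun x ↦ f x + g x) =
      symmFirstMoment μ R a b f + symmFirstMoment μ R a b g := by
  have hint {j : EuclideanSpace ℝ ι → EuclideanSpace ℝ ι} (hj : Continuous j)
      (hjs : HasCompactSupport j) :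
      Integrable (fun x ↦ (x - R) b * j x a + (x - R) a * j x b) μ :=
    (by fun_prop : Continuous _).integrable_of_hasCompactSupport
      (hjs.mono fun x hx hjx ↦ hx (by simp [hjx]))
  simp only [symmFirstMoment, ← integral_add (hint hf hfs) (hint hg hgs)]
  congr 1 with x
  simp only [PiLp.add_apply]
  ring

theorem symmFirstMoment_smul_const_eq_zero [IsFiniteMeasureOnCompacts μ]
    {ρ : EuclideanSpace ℝ ι → ℝ} (hρ : Continuous ρ) (hρs : HasCompactSupport ρ) {R : EuclideanSpace ℝ ι}
    (hR : ∫ x, ρ x • (x - R) ∂μ = 0) (a b : ι) (v : EuclideanSpace ℝ ι) :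
    symmFirstMoment μ R a b (fun x ↦ ρ x • v) = 0 := by
  let ℓ : EuclideanSpace ℝ ι →L[ℝ] ℝ := v a • EuclideanSpace.proj b + v b • EuclideanSpace.proj a
  have hint : Integrable (fun x ↦ ρ x • (x - R)) μ :=
    (by fun_prop : Continuous _).integrable_of_hasCompactSupport hρs.smul_right
  calc symmFirstMoment μ R a b (fun x ↦ ρ x • v) = ∫ x, ℓ (ρ x • (x - R)) ∂μ := by
        unfold symmFirstMoment
        congr 1 with x
        simp [ℓ]
        ring
    _ = 0 := by rw [ℓ.integral_comp_comm hint, hR, map_zero]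

theorem symmFirstMoment_eq_zero_of_divergence_eq_zero [DecidableEq ι] [μ.IsAddHaarMeasure]
    (R : EuclideanSpace ℝ ι) (a b : ι) {j : EuclideanSpace ℝ ι → EuclideanSpace ℝ ι}
    (hj : ContDiff ℝ 1 j) (hjs : HasCompactSupport j) (hdiv : ∀ x, divergence j x = 0) :
    symmFirstMoment μ R a b j = 0 := by
  have h := integral_fderiv_apply_eq_zero_of_divergence_eq_zero (μ := μ)
    (φ := fun y ↦ (y - R) a * (y - R) b) (by fun_prop) hj hjs hdiv
  simp only [fderiv_sub_apply_mul_sub_apply] at h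
  rw [symmFirstMoment, ← h]
  congr 1 with x
  ring

end FirstMoment

@[fun_prop]
theorem contDiff_cross3 {n : WithTop ℕ∞} (u : E3) : ContDiff ℝ n (cross3 u) :=
  (LinearMap.toContinuousLinearMap ((WithLp.linearEquiv 2 ℝ (Fin 3 → ℝ)).symm.toLinearMap ∘ₗ
    crossProduct (toV u) ∘ₗ (WithLp.linearEquiv 2 ℝ (Fin 3 → ℝ)).toLinearMap)).contDiff

/-- if the physical current `j = j_m + ρA` is divergence-free, with
`A(r) = A₀ + ½ B × (r−R)` and `R` the centre of charge of `ρ`, then for all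
coordinate indices `a, b`:
`½ ∫ ρ [(r−R)_b (B×(r−R))_a + (r−R)_a (B×(r−R))_b] = −∫ [(r−R)_b (j_m)_a + (r−R)_a (j_m)_b]`. -/
theorem symmetrized_first_moments_of_divergence_free_physical_current
    (ρ : E3 → ℝ) (jm : E3 → E3) (R A₀ B : E3)
    (hρ : ContDiff ℝ 1 ρ) (hρsupp : HasCompactSupport ρ)
    (hjm : ContDiff ℝ 1 jm) (hjmsupp : HasCompactSupport jm)
    (hctr : (∫ r : E3, ρ r • (r - R)) = 0)
    (A : E3 → E3) (hA : ∀ r, A r = A₀ + (2⁻¹ : ℝ) • cross3 B (r - R))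
    (hdiv : ∀ r : E3,
      (∑ i : Fin 3, fderiv ℝ (fun x => jm x + ρ x • A x) r (EuclideanSpace.single i 1) i) = 0) :
    ∀ a b : Fin 3,
      (2⁻¹ : ℝ) * (∫ r : E3, ρ r *
          ((r - R) b * cross3 B (r - R) a + (r - R) a * cross3 B (r - R) b))
        = -∫ r : E3, ((r - R) b * jm r a + (r - R) a * jm r b) := by
  intro a b
  have hAcd : ContDiff ℝ 1 A := by
    rw [funext hA]
    fun_prop
  have hρc := hρ.continuous
  have hAc := hAcd.continuous
  have hρsmul {v : E3 → E3} : HasCompactSupport fun x ↦ ρ x • v x := hρsupp.smul_right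
  have hmoment := symmFirstMoment_eq_zero_of_divergence_eq_zero (μ := volume) R a b
    (j := fun x ↦ jm x + ρ x • A x) (hjm.add (hρ.smul hAcd)) (hjmsupp.add hρsmul) hdiv
  rw [symmFirstMoment_add R a b hjm.continuous hjmsupp (by fun_prop) hρsmul] at hmoment
  simp_rw [hA, smul_add] at hmoment
  rw [symmFirstMoment_add R a b (by fun_prop) hρsmul (by fun_prop) hρsmul,
    symmFirstMoment_smul_const_eq_zero hρc hρsupp hctr, zero_add] at hmoment
  have hcross : symmFirstMoment volume R a b (fun x ↦ ρ x • (2⁻¹ : ℝ) • cross3 B (x - R)) =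
      2⁻¹ * ∫ r, ρ r * ((r - R) b * cross3 B (r - R) a + (r - R) a * cross3 B (r - R) b) := by
    rw [symmFirstMoment, ← integral_const_mul]
    congr 1 with r
    simp only [PiLp.smul_apply, smul_eq_mul]
    ring
  rw [← hcross]
  exact eq_neg_of_add_eq_zero_right hmoment
end
end

section
/- Let S be a nonempty set (of quantum states), V a set (of density data), d: S → V a map assigning to each state its densities, F: S → ℝ a universal internal-energy function, and G₁, G₂: V → ℝ two potential-energy functions; define total energies E_k(s) = F(s) + G_k(d(s)) for k = 1, 2. Suppose s₁ minimizes E₁ over S, s₂ minimizes E₂ over S, and d(s₁) = d(s₂). Then F(s₁) = F(s₂), s₁ also minimizes E₂ over S, and s₂ also minimizes E₁ over S. -/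
section EnergyMinimizers

variable {S V : Type*} (d : S → V) (F : S → ℝ)

theorem internal_energy_eq_of_minimizers_of_density_eq (G₁ G₂ : V → ℝ) {s₁ s₂ : S}
    (h₁ : ∀ s : S, F s₁ + G₁ (d s₁) ≤ F s + G₁ (d s))
    (h₂ : ∀ s : S, F s₂ + G₂ (d s₂) ≤ F s + G₂ (d s))
    (hd : d s₁ = d s₂) : F s₁ = F s₂ := by
  have h₁₂ := h₁ s₂
  have h₂₁ := h₂ s₁
  rw [hd] at h₁₂ h₂₁
  linarith

theorem minimizer_of_internal_energy_eq_of_density_eq (G : V → ℝ) {a b : S}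
    (hb : ∀ s : S, F b + G (d b) ≤ F s + G (d s)) (hF : F a = F b) (hd : d a = d b) :
    ∀ s : S, F a + G (d a) ≤ F s + G (d s) := by
  rw [hF, hd]
  exact hb

end EnergyMinimizers

theorem weak_hohenberg_kohn_general
    {S V : Type*}
    (d : S → V) (F : S → ℝ) (G₁ G₂ : V → ℝ) (s₁ s₂ : S)
    (h₁ : ∀ s : S, F s₁ + G₁ (d s₁) ≤ F s + G₁ (d s))
    (h₂ : ∀ s : S, F s₂ + G₂ (d s₂) ≤ F s + G₂ (d s))
    (hd : d s₁ = d s₂) :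
    F s₁ = F s₂ ∧
      (∀ s : S, F s₁ + G₂ (d s₁) ≤ F s + G₂ (d s)) ∧
      (∀ s : S, F s₂ + G₁ (d s₂) ≤ F s + G₁ (d s)) := by
  have hF := internal_energy_eq_of_minimizers_of_density_eq d F G₁ G₂ h₁ h₂ hd
  exact ⟨hF, minimizer_of_internal_energy_eq_of_density_eq d F G₂ h₂ hF hd,
    minimizer_of_internal_energy_eq_of_density_eq d F G₁ h₁ hF.symm hd.symm⟩

/-- abstract weak Hohenberg–Kohn theorem: if `s₁` minimizes
`E₁ = F + G₁ ∘ d` and `s₂` minimizes `E₂ = F + G₂ ∘ d` over `S`, and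
`d(s₁) = d(s₂)`, then `F(s₁) = F(s₂)` and each state also minimizes the
other total energy. -/
theorem weak_hohenberg_kohn
    {S V : Type*} [Nonempty S]
    (d : S → V) (F : S → ℝ) (G₁ G₂ : V → ℝ) (s₁ s₂ : S)
    (h₁ : ∀ s : S, F s₁ + G₁ (d s₁) ≤ F s + G₁ (d s))
    (h₂ : ∀ s : S, F s₂ + G₂ (d s₂) ≤ F s + G₂ (d s))
    (hd : d s₁ = d s₂) :
    F s₁ = F s₂ ∧
      (∀ s : S, F s₁ + G₂ (d s₁) ≤ F s + G₂ (d s)) ∧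
      (∀ s : S, F s₂ + G₁ (d s₂) ≤ F s + G₁ (d s)) :=
  weak_hohenberg_kohn_general d F G₁ G₂ s₁ s₂ h₁ h₂ hd
end
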